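/- arXiv:2503.00685 — 4 statements merged into one kernel-verified Lean document; each statement's English description precedes it below -/
import Mathlib

section
/- For all m, n >= 0, the number of involutions satisfies the convolution identity cd(m+n) = sum over k >= 0 of k! * C(m,k) * C(n,k) * cd(m-k) * cd(n-k). -/
/-- `cd n` is the number of involutions in the symmetric group on `n` letters (OEIS A000085). -/
noncomputable def cd (n : ℕ) : ℕ :=
  Nat.card {g : Equiv.Perm (Fin n) // g ^ 2 = 1}

/-!
An involution either fixes a given point `x` or pairs it with one of the other `n` points, and
deleting `x` (with its partner) gives the recurrence `cd (n + 1) = cd n + n * cd (n - 1)`.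
The right-hand side `S m n` of the identity (`pairingSum cd m n`) obeys the matching recurrence
`S (m + 1) n = S m n + m * S (m - 1) n + n * S m (n - 1)` term by term, by Pascal's rule for
`C(m + 1, k)` and the recurrence for `cd (m + 1 - k)`: the new point of the first block is fixed,
paired inside its block, or paired across. As `S 0 n = cd n`, induction on `m` gives
`S m n = cd (m + n)`.
-/

open Equiv Equiv.Perm Finset
open scoped Nat

lemma card_sq_eq_one_congr {G H : Type*} [Monoid G] [Monoid H] (e : G ≃* H) :
    Nat.card {g : G // g ^ 2 = 1} = Nat.card {h : H // h ^ 2 = 1} :=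
  Nat.card_congr <| e.toEquiv.subtypeEquiv fun g => by
    simp only [MulEquiv.toEquiv_eq_coe, EquivLike.coe_coe, ← map_pow, MulEquiv.map_eq_one_iff]

lemma cd_card_eq_card_involutions (α : Type*) [Fintype α] :
    cd (Fintype.card α) = Nat.card {g : Perm α // g ^ 2 = 1} :=
  card_sq_eq_one_congr (Fintype.equivFin α).symm.permCongrHom

section Involutions

variable {α : Type*}

lemma card_involutions_supported_eq (p : α → Prop) [DecidablePred p] :
    Nat.card {g : Perm α // (∀ a, ¬p a → g a = a) ∧ g ^ 2 = 1} =
      Nat.card {g : Perm (Subtype p) // g ^ 2 = 1} := by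
  rw [← Nat.card_congr <|
    subtypeSubtypeEquivSubtypeInter (fun g : Perm α => ∀ a, ¬p a → g a = a) (· ^ 2 = 1)]
  refine Nat.card_congr ((Perm.subtypeEquivSubtypePerm p).subtypeEquiv fun g => ?_).symm
  simp only [Perm.subtypeEquivSubtypePerm_apply_coe, ← map_pow]
  exact (map_eq_one_iff _ ofSubtype_injective).symm

variable [DecidableEq α]

lemma sq_swap_mul_of_apply_eq {g : Perm α} {x y : α} (hx : g x = y) (hy : g y = x) :
    (swap x y * g) ^ 2 = g ^ 2 := by
  have hcomm : g * swap x y = swap x y * g := by rw [mul_swap_eq_swap_mul, hx, hy, swap_comm]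
  rw [sq, sq, mul_assoc, ← mul_assoc g, hcomm, mul_assoc, ← mul_assoc, swap_mul_self, one_mul]

lemma involution_and_apply_eq_iff (g : Perm α) (x y : α) :
    g ^ 2 = 1 ∧ g x = y ↔
      (∀ a, ¬(a ≠ x ∧ a ≠ y) → (swap x y * g) a = a) ∧ (swap x y * g) ^ 2 = 1 := by
  simp only [not_and_or, not_not, or_imp, forall_and, forall_eq, Perm.mul_apply,
    swap_apply_eq_iff, swap_apply_left, swap_apply_right]
  constructor
  · rintro ⟨hg, hx⟩
    have hy : g y = x := by rw [← hx, ← Perm.mul_apply, ← sq, hg, Perm.one_apply]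
    exact ⟨⟨hx, hy⟩, by rw [sq_swap_mul_of_apply_eq hx hy, hg]⟩
  · rintro ⟨⟨hx, hy⟩, hg⟩
    exact ⟨by rwa [← sq_swap_mul_of_apply_eq hx hy], hx⟩

variable [Fintype α]

lemma card_involutions_apply_eq (x y : α) :
    Nat.card {g : Perm α // g ^ 2 = 1 ∧ g x = y} =
      cd (Fintype.card {a // a ≠ x ∧ a ≠ y}) := by
  rw [cd_card_eq_card_involutions, ← card_involutions_supported_eq]
  exact Nat.card_congr <| (Equiv.mulLeft (swap x y)).subtypeEquiv fun g =>
    involution_and_apply_eq_iff g x y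

lemma card_involutions_eq_sum (x : α) :
    Nat.card {g : Perm α // g ^ 2 = 1} = ∑ y, cd (Fintype.card {a // a ≠ x ∧ a ≠ y}) := by
  rw [Nat.card_congr (sigmaFiberEquiv fun g : {g : Perm α // g ^ 2 = 1} => g.1 x).symm,
    Nat.card_sigma]
  refine Finset.sum_congr rfl fun y _ => ?_
  rw [← card_involutions_apply_eq]
  exact Nat.card_congr (subtypeSubtypeEquivSubtypeInter (· ^ 2 = 1) fun g : Perm α => g x = y)

lemma card_subtype_ne_and_ne (x y : α) :
    Fintype.card {a // a ≠ x ∧ a ≠ y} = Fintype.card α - #{x, y} := by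
  rw [Fintype.card_subtype, ← card_univ, ← card_sdiff_of_subset (subset_univ _)]
  congr 1
  ext a
  simp

end Involutions

lemma cd_zero : cd 0 = 1 := by
  simp [cd]

lemma cd_succ (n : ℕ) : cd (n + 1) = cd n + n * cd (n - 1) := by
  rw [← Fintype.card_fin (n + 1), cd_card_eq_card_involutions, card_involutions_eq_sum 0,
    Fin.sum_univ_succ]
  simp only [card_subtype_ne_and_ne, Fintype.card_fin, pair_eq_singleton, card_singleton,
    add_tsub_cancel_right, card_pair (Fin.succ_ne_zero _).symm, sum_const, card_univ, smul_eq_mul]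
  rfl

lemma Nat.mul_choose_sub_one_eq_choose_mul_sub (m k : ℕ) :
    m * (m - 1).choose k = m.choose k * (m - k) := by
  cases m with
  | zero => simp
  | succ m => rw [add_tsub_cancel_right, mul_comm, Nat.choose_mul_succ_eq]

lemma Nat.mul_choose_sub_one_eq_succ_mul_choose_succ (n k : ℕ) :
    n * (n - 1).choose k = (k + 1) * n.choose (k + 1) := by
  cases n with
  | zero => simp
  | succ n => rw [add_tsub_cancel_right, Nat.add_one_mul_choose_eq, mul_comm]

section PairingSum

variable (f : ℕ → ℕ)

/-- For `f = cd`, the number of involutions of an `m`-set plus an `n`-set with exactly `k`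
2-cycles joining the two sets. -/
def pairingTerm (m n k : ℕ) : ℕ :=
  k ! * m.choose k * n.choose k * f (m - k) * f (n - k)

def pairingSum (m n : ℕ) : ℕ :=
  ∑ k ∈ range (min m n + 1), pairingTerm f m n k

lemma pairingTerm_eq_zero {m n k : ℕ} (h : min m n < k) : pairingTerm f m n k = 0 := by
  rcases min_lt_iff.mp h with h | h <;> simp [pairingTerm, Nat.choose_eq_zero_of_lt h]

lemma pairingSum_eq_sum_range {m n N : ℕ} (h : min m n < N) :
    pairingSum f m n = ∑ k ∈ range N, pairingTerm f m n k :=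
  sum_subset (range_subset_range.mpr h) fun _ _ hk =>
    pairingTerm_eq_zero f (by rwa [mem_range, not_lt, Nat.succ_le_iff] at hk)

variable {f}

lemma pairingTerm_add_mul_pairingTerm_sub_one_left (hf : ∀ n, f (n + 1) = f n + n * f (n - 1))
    (m n k : ℕ) :
    pairingTerm f m n k + m * pairingTerm f (m - 1) n k =
      k ! * m.choose k * n.choose k * f (m + 1 - k) * f (n - k) := by
  unfold pairingTerm
  rcases le_or_gt k m with hk | hk
  · obtain ⟨r, rfl⟩ := Nat.exists_eq_add_of_le hk
    rw [show k + r + 1 - k = r + 1 by omega, show k + r - k = r by omega,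
      show k + r - 1 - k = r - 1 by omega, hf]
    have hc := Nat.mul_choose_sub_one_eq_choose_mul_sub (k + r) k
    rw [add_tsub_cancel_left] at hc
    linear_combination (k ! * n.choose k * f (r - 1) * f (n - k)) * hc
  · simp [Nat.choose_eq_zero_of_lt hk, Nat.choose_eq_zero_of_lt (show m - 1 < k by omega)]

lemma mul_pairingTerm_sub_one_right (m n k : ℕ) :
    n * pairingTerm f m (n - 1) k =
      (k + 1)! * m.choose k * n.choose (k + 1) * f (m - k) * f (n - (k + 1)) := by
  unfold pairingTerm
  rw [Nat.factorial_succ, Nat.sub_sub, add_comm 1 k]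
  linear_combination (k ! * m.choose k * f (m - k) * f (n - (k + 1))) *
    Nat.mul_choose_sub_one_eq_succ_mul_choose_succ n k

lemma pairingTerm_succ_left_zero (hf : ∀ n, f (n + 1) = f n + n * f (n - 1)) (m n : ℕ) :
    pairingTerm f (m + 1) n 0 = pairingTerm f m n 0 + m * pairingTerm f (m - 1) n 0 := by
  rw [pairingTerm_add_mul_pairingTerm_sub_one_left hf]
  simp [pairingTerm]

lemma pairingTerm_succ_left_succ (hf : ∀ n, f (n + 1) = f n + n * f (n - 1)) (m n k : ℕ) :
    pairingTerm f (m + 1) n (k + 1) =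
      pairingTerm f m n (k + 1) + m * pairingTerm f (m - 1) n (k + 1) +
        n * pairingTerm f m (n - 1) k := by
  rw [pairingTerm_add_mul_pairingTerm_sub_one_left hf, mul_pairingTerm_sub_one_right,
    pairingTerm, Nat.choose_succ_succ', Nat.add_sub_add_right]
  ring

lemma sum_range_pairingTerm_succ_left (hf : ∀ n, f (n + 1) = f n + n * f (n - 1))
    (m n N : ℕ) :
    ∑ k ∈ range (N + 1), pairingTerm f (m + 1) n k =
      ∑ k ∈ range (N + 1), pairingTerm f m n k +
        m * ∑ k ∈ range (N + 1), pairingTerm f (m - 1) n k +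
          n * ∑ k ∈ range N, pairingTerm f m (n - 1) k := by
  simp only [sum_range_succ' _ N, pairingTerm_succ_left_succ hf,
    pairingTerm_succ_left_zero hf, sum_add_distrib, mul_add, mul_sum]
  ring

lemma pairingSum_succ_left (hf : ∀ n, f (n + 1) = f n + n * f (n - 1)) (m n : ℕ) :
    pairingSum f (m + 1) n =
      pairingSum f m n + m * pairingSum f (m - 1) n + n * pairingSum f m (n - 1) := by
  rw [pairingSum_eq_sum_range f (N := m + 2) (by omega),
    pairingSum_eq_sum_range f (N := m + 2) (by omega),
    pairingSum_eq_sum_range f (N := m + 2) (by omega),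
    pairingSum_eq_sum_range f (N := m + 1) (by omega)]
  exact sum_range_pairingTerm_succ_left hf m n (m + 1)

lemma mul_apply_sub_one_add (m n : ℕ) : m * f (m - 1 + n) = m * f (m + n - 1) := by
  obtain rfl | hm := m.eq_zero_or_pos
  · simp
  · rw [show m - 1 + n = m + n - 1 by omega]

theorem pairingSum_eq_of_recurrence (h0 : f 0 = 1) (hf : ∀ n, f (n + 1) = f n + n * f (n - 1))
    (m n : ℕ) : pairingSum f m n = f (m + n) := by
  induction m using Nat.strong_induction_on generalizing n with
  | _ m ih =>
  cases m with
  | zero => simp [pairingSum, pairingTerm, h0]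
  | succ m =>
    rw [pairingSum_succ_left hf, ih m (by omega), ih m (by omega), ih (m - 1) (by omega),
      show m + 1 + n = m + n + 1 by omega, hf, mul_apply_sub_one_add, add_comm m (n - 1),
      mul_apply_sub_one_add, add_comm n m]
    ring

end PairingSum

/-- The convolution identity
`cd (m+n) = ∑_{k ≥ 0} k! * C(m,k) * C(n,k) * cd (m-k) * cd (n-k)`; since the binomial
coefficients vanish for `k > min m n`, the sum is over `0 ≤ k ≤ min m n`. -/
theorem cd_convolution (m n : ℕ) :
    cd (m + n) =
      ∑ k ∈ Finset.range (min m n + 1),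
        k.factorial * Nat.choose m k * Nat.choose n k * cd (m - k) * cd (n - k) :=
  (pairingSum_eq_of_recurrence cd_zero cd_succ m n).symm
end

section
/- For the oriented Brauer category, b_n = sum over k from 0 to n of cd(k)^2 * C(n,k)^2 * (n-k)! equals cd(2n), where cd is the involution-counting sequence. -/
open Equiv Finset
open scoped Classical

/-- Involutions (elements of order dividing 2) of a type. -/
abbrev Invo (α : Type*) := {g : Equiv.Perm α // g ^ 2 = 1}

lemma invo_sq_iff {α : Type*} (g : Equiv.Perm α) : g ^ 2 = 1 ↔ ∀ x, g (g x) = x := by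
  constructor
  · intro h x
    have := Equiv.ext_iff.1 h x
    simpa [pow_two] using this
  · intro h
    ext x
    simp [pow_two, h x]

/-- `Invo` is invariant under equivalences. -/
noncomputable def invoCongr {α β : Type*} (e : α ≃ β) : Invo α ≃ Invo β where
  toFun g := ⟨e.permCongr g.1, by
    rw [invo_sq_iff]; intro x
    simp [Equiv.permCongr_apply, (invo_sq_iff g.1).1 g.2]⟩
  invFun g := ⟨e.symm.permCongr g.1, by
    rw [invo_sq_iff]; intro x
    simp [Equiv.permCongr_apply, (invo_sq_iff g.1).1 g.2]⟩
  left_inv g := Subtype.ext (by ext x; simp [Equiv.permCongr_apply])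
  right_inv g := Subtype.ext (by ext x; simp [Equiv.permCongr_apply])

lemma card_invo (α : Type*) [Fintype α] : Nat.card (Invo α) = cd (Fintype.card α) := by
  rw [show cd (Fintype.card α) = Nat.card (Invo (Fin (Fintype.card α))) from rfl]
  exact Nat.card_congr (invoCongr (Fintype.equivFin α))

section Main
variable {α β : Type*} [Fintype α] [Fintype β]

/-- Decomposition data for an involution on `α ⊕ β`: internally matched parts `s, t`,
a cross matching of the complements, and involutions on `s` and `t`. -/
abbrev BData (α β : Type*) [Fintype α] [Fintype β] :=
  Σ (s : Finset α) (t : Finset β), (↥(sᶜ) ≃ ↥(tᶜ)) × Invo ↥s × Invo ↥t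

noncomputable def psiFun (d : BData α β) : α ⊕ β → α ⊕ β := fun x =>
  match x with
  | .inl a => if h : a ∈ d.1 then .inl ↑(d.2.2.2.1.1 ⟨a, h⟩)
              else .inr ↑(d.2.2.1 ⟨a, Finset.mem_compl.2 h⟩)
  | .inr b => if h : b ∈ d.2.1 then .inr ↑(d.2.2.2.2.1 ⟨b, h⟩)
              else .inl ↑(d.2.2.1.symm ⟨b, Finset.mem_compl.2 h⟩)

lemma psiFun_invol (d : BData α β) : Function.Involutive (psiFun d) := by
  obtain ⟨s, t, e, gs, gt⟩ := d
  have hgs := (invo_sq_iff gs.1).1 gs.2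
  have hgt := (invo_sq_iff gt.1).1 gt.2
  rintro (a | b)
  · by_cases h : a ∈ s
    · simp only [psiFun, dif_pos h]
      rw [dif_pos (gs.1 ⟨a, h⟩).2]
      simp [hgs]
    · simp only [psiFun, dif_neg h]
      have h2 : ↑(e ⟨a, Finset.mem_compl.2 h⟩) ∉ t := Finset.mem_compl.1 (e ⟨a, Finset.mem_compl.2 h⟩).2
      rw [dif_neg h2]
      simp
  · by_cases h : b ∈ t
    · simp only [psiFun, dif_pos h]
      rw [dif_pos (gt.1 ⟨b, h⟩).2]
      simp [hgt]
    · simp only [psiFun, dif_neg h]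
      have h2 : ↑(e.symm ⟨b, Finset.mem_compl.2 h⟩) ∉ s := Finset.mem_compl.1 (e.symm ⟨b, Finset.mem_compl.2 h⟩).2
      rw [dif_neg h2]
      simp

noncomputable def psi (d : BData α β) : Invo (α ⊕ β) :=
  ⟨(psiFun_invol d).toPerm, by
    rw [invo_sq_iff]; exact psiFun_invol d⟩

lemma psi_apply (d : BData α β) (x : α ⊕ β) : (psi d).1 x = psiFun d x := rfl


lemma psi_isLeft (s : Finset α) (t : Finset β) (e : ↥(sᶜ) ≃ ↥(tᶜ)) (gs : Invo ↥s)
    (gt : Invo ↥t) (a : α) :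
    ((psi (⟨s, t, e, gs, gt⟩ : BData α β)).1 (.inl a)).isLeft ↔ a ∈ s := by
  by_cases h : a ∈ s <;> simp [psi_apply, psiFun, h]

lemma psi_isRight (s : Finset α) (t : Finset β) (e : ↥(sᶜ) ≃ ↥(tᶜ)) (gs : Invo ↥s)
    (gt : Invo ↥t) (b : β) :
    ((psi (⟨s, t, e, gs, gt⟩ : BData α β)).1 (.inr b)).isRight ↔ b ∈ t := by
  by_cases h : b ∈ t <;> simp [psi_apply, psiFun, h]

lemma psi_injective : Function.Injective (psi : BData α β → Invo (α ⊕ β)) := by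
  rintro ⟨s, t, e, gs, gt⟩ ⟨s', t', e', gs', gt'⟩ h
  have hx : ∀ x, (psi (⟨s, t, e, gs, gt⟩ : BData α β)).1 x
      = (psi (⟨s', t', e', gs', gt'⟩ : BData α β)).1 x := by
    intro x; rw [h]
  have hs : s = s' := by
    ext a
    rw [← psi_isLeft s t e gs gt a, ← psi_isLeft s' t' e' gs' gt' a, hx (.inl a)]
  subst hs
  have ht : t = t' := by
    ext b
    rw [← psi_isRight s t e gs gt b, ← psi_isRight s t' e' gs' gt' b, hx (.inr b)]
  subst ht
  have he : e = e' := by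
    ext x
    have hxm : (x : α) ∉ s := Finset.mem_compl.1 x.2
    have := hx (.inl ↑x)
    simp only [psi_apply, psiFun, dif_neg hxm] at this
    exact Sum.inr_injective this
  subst he
  have hgs : gs = gs' := by
    refine Subtype.ext (Equiv.ext fun x => ?_)
    have := hx (.inl ↑x)
    simp only [psi_apply, psiFun, dif_pos x.2] at this
    exact Subtype.coe_injective (Sum.inl_injective this)
  subst hgs
  have hgt : gt = gt' := by
    refine Subtype.ext (Equiv.ext fun x => ?_)
    have := hx (.inr ↑x)
    simp only [psi_apply, psiFun, dif_pos x.2] at this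
    exact Subtype.coe_injective (Sum.inr_injective this)
  subst hgt
  rfl


lemma psi_surjective : Function.Surjective (psi : BData α β → Invo (α ⊕ β)) := by
  rintro ⟨g, hg⟩
  have hg' : ∀ x, g (g x) = x := (invo_sq_iff g).1 hg
  set s : Finset α := Finset.univ.filter (fun a => (g (.inl a)).isLeft) with hs
  set t : Finset β := Finset.univ.filter (fun b => (g (.inr b)).isRight) with ht
  have hmem_s : ∀ a : α, a ∈ s ↔ (g (.inl a)).isLeft := by intro a; simp [hs]
  have hmem_t : ∀ b : β, b ∈ t ↔ (g (.inr b)).isRight := by intro b; simp [ht]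
  -- the involution on s
  have hLs : ∀ a : ↥s, (g (.inl ↑a)).isLeft := fun a => (hmem_s _).1 a.2
  let fs : ↥s → ↥s := fun a => ⟨(g (.inl ↑a)).getLeft (hLs a), by
    rw [hmem_s, Sum.inl_getLeft, hg']; rfl⟩
  have hfs : ∀ a : ↥s, Sum.inl (↑(fs a) : α) = g (.inl ↑a) := fun a => Sum.inl_getLeft _ _
  have hfs2 : Function.Involutive fs := by
    intro a
    apply Subtype.coe_injective
    apply Sum.inl_injective (β := β)
    rw [hfs, hfs, hg']
  -- the involution on t
  have hRt : ∀ b : ↥t, (g (.inr ↑b)).isRight := fun b => (hmem_t _).1 b.2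
  let ft : ↥t → ↥t := fun b => ⟨(g (.inr ↑b)).getRight (hRt b), by
    rw [hmem_t, Sum.inr_getRight, hg']; rfl⟩
  have hft : ∀ b : ↥t, Sum.inr (↑(ft b) : β) = g (.inr ↑b) := fun b => Sum.inr_getRight _ _
  have hft2 : Function.Involutive ft := by
    intro b
    apply Subtype.coe_injective
    apply Sum.inr_injective (α := α)
    rw [hft, hft, hg']
  -- the cross matching
  have hRs : ∀ a : ↥(sᶜ), (g (.inl ↑a)).isRight := by
    intro a
    have := Finset.mem_compl.1 a.2
    rw [hmem_s] at this
    exact Sum.not_isLeft.1 this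
  have hLt : ∀ b : ↥(tᶜ), (g (.inr ↑b)).isLeft := by
    intro b
    have := Finset.mem_compl.1 b.2
    rw [hmem_t] at this
    exact Sum.not_isRight.1 this
  let fe : ↥(sᶜ) → ↥(tᶜ) := fun a => ⟨(g (.inl ↑a)).getRight (hRs a), by
    rw [Finset.mem_compl, hmem_t, Sum.inr_getRight, hg']
    simp⟩
  have hfe : ∀ a : ↥(sᶜ), Sum.inr (↑(fe a) : β) = g (.inl ↑a) := fun a => Sum.inr_getRight _ _
  let fe' : ↥(tᶜ) → ↥(sᶜ) := fun b => ⟨(g (.inr ↑b)).getLeft (hLt b), by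
    rw [Finset.mem_compl, hmem_s, Sum.inl_getLeft, hg']
    simp⟩
  have hfe' : ∀ b : ↥(tᶜ), Sum.inl (↑(fe' b) : α) = g (.inr ↑b) := fun b => Sum.inl_getLeft _ _
  let e : ↥(sᶜ) ≃ ↥(tᶜ) :=
    { toFun := fe, invFun := fe'
      left_inv := by
        intro a
        apply Subtype.coe_injective
        apply Sum.inl_injective (β := β)
        rw [hfe', hfe, hg']
      right_inv := by
        intro b
        apply Subtype.coe_injective
        apply Sum.inr_injective (α := α)
        rw [hfe, hfe', hg'] }
  refine ⟨⟨s, t, e, ⟨hfs2.toPerm, by rw [invo_sq_iff]; exact hfs2⟩,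
      ⟨hft2.toPerm, by rw [invo_sq_iff]; exact hft2⟩⟩, ?_⟩
  apply Subtype.ext
  apply Equiv.ext
  rintro (a | b)
  · by_cases h : a ∈ s
    · rw [psi_apply]
      show psiFun _ _ = _
      simp only [psiFun, dif_pos h]
      exact hfs ⟨a, h⟩
    · rw [psi_apply]
      show psiFun _ _ = _
      simp only [psiFun, dif_neg h]
      exact hfe ⟨a, Finset.mem_compl.2 h⟩
  · by_cases h : b ∈ t
    · rw [psi_apply]
      show psiFun _ _ = _
      simp only [psiFun, dif_pos h]
      exact hft ⟨b, h⟩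
    · rw [psi_apply]
      show psiFun _ _ = _
      simp only [psiFun, dif_neg h]
      exact hfe' ⟨b, Finset.mem_compl.2 h⟩


lemma nat_card_invo_sum : Nat.card (Invo (α ⊕ β)) = Fintype.card (BData α β) := by
  rw [← Nat.card_eq_fintype_card]
  exact (Nat.card_eq_of_bijective psi ⟨psi_injective, psi_surjective⟩).symm

lemma card_bdata : Fintype.card (BData α β) =
    ∑ s : Finset α, ∑ t : Finset β,
      (if (sᶜ : Finset α).card = (tᶜ : Finset β).card then
          ((sᶜ : Finset α).card).factorial else 0)
        * (cd s.card * cd t.card) := by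
  rw [Fintype.card_sigma]
  refine Finset.sum_congr rfl fun s _ => ?_
  rw [Fintype.card_sigma]
  refine Finset.sum_congr rfl fun t _ => ?_
  rw [Fintype.card_prod, Fintype.card_prod]
  congr 1
  · by_cases h : (sᶜ : Finset α).card = (tᶜ : Finset β).card
    · rw [if_pos h]
      have h2 : Fintype.card ↥(sᶜ) = Fintype.card ↥(tᶜ) := by
        simpa only [Fintype.card_coe] using h
      rw [Fintype.card_equiv (Fintype.equivOfCardEq h2), Fintype.card_coe]
    · rw [if_neg h, Fintype.card_eq_zero_iff]
      exact ⟨fun e => h (by simpa only [Fintype.card_coe] using Fintype.card_congr e)⟩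
  · congr 1 <;> rw [← Nat.card_eq_fintype_card, card_invo, Fintype.card_coe]

end Main

lemma sum_finset_card {γ : Type*} [Fintype γ] (f : ℕ → ℕ) :
    ∑ s : Finset γ, f s.card
      = ∑ k ∈ Finset.range (Fintype.card γ + 1), (Fintype.card γ).choose k * f k := by
  rw [← Finset.powerset_univ, Finset.sum_powerset, Finset.card_univ]
  refine Finset.sum_congr rfl fun k _ => ?_
  rw [Finset.sum_congr rfl (fun s hs => by
        rw [(Finset.mem_powersetCard_univ.1 hs : s.card = k)]),
      Finset.sum_const, Finset.card_powersetCard, Finset.card_univ, smul_eq_mul]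

/-- For the oriented Brauer category:
`∑_{k=0}^{n} cd(k)² * C(n,k)² * (n-k)! = cd(2n)`. -/
theorem oriented_brauer_count (n : ℕ) :
    ∑ k ∈ Finset.range (n + 1), cd k ^ 2 * Nat.choose n k ^ 2 * (n - k).factorial =
      cd (2 * n) := by
  have h1 : cd (2 * n) = Nat.card (Invo (Fin n ⊕ Fin n)) := by
    rw [card_invo (Fin n ⊕ Fin n)]
    congr 1
    simp [two_mul]
  rw [h1, nat_card_invo_sum, card_bdata]
  simp only [Finset.card_compl, Fintype.card_fin]
  rw [sum_finset_card (fun k => ∑ t : Finset (Fin n),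
        (if n - k = n - t.card then (n - k).factorial else 0) * (cd k * cd t.card))]
  simp only [Fintype.card_fin]
  refine Finset.sum_congr rfl fun k hk => ?_
  have hk' : k ≤ n := Nat.lt_succ_iff.1 (Finset.mem_range.1 hk)
  rw [sum_finset_card (fun j =>
        (if n - k = n - j then (n - k).factorial else 0) * (cd k * cd j))]
  simp only [Fintype.card_fin]
  rw [Finset.sum_eq_single_of_mem k hk]
  · rw [if_pos rfl]; ring
  · intro j hj hjk
    have hj' : j ≤ n := Nat.lt_succ_iff.1 (Finset.mem_range.1 hj)
    rw [if_neg, zero_mul, mul_zero]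
    intro h
    exact hjk (by omega)
end

section
/- The exponential generating function of the sequence b_n = sum_{m=0}^{n} M(n,m) * T(m,k), where M(n,m) = sum_{i=m}^{n} S(n,i)*C(i,m) and T(m,k) = sum_i m!/(i!*(m-2i)!*2^i) * k^{m-i}, is exp((k/2)*exp(2x) + exp(x) - (k+2)/2). -/
/-- Stirling numbers of the second kind. -/
def stirling2 : ℕ → ℕ → ℕ
  | 0, 0 => 1
  | 0, _ + 1 => 0
  | _ + 1, 0 => 0
  | n + 1, k + 1 => (k + 1) * stirling2 n (k + 1) + stirling2 n k

/-- `M n m = ∑_{i=m}^{n} S(n,i) * C(i,m)`, the number of merge diagrams from `n` to `m`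
strands in the cobordism category. -/
def mergeCount (n m : ℕ) : ℕ :=
  ∑ i ∈ Finset.Icc m n, stirling2 n i * Nat.choose i m

/-- `T m k = ∑_i m!/(i!(m-2i)!2^i) * k^(m-i)`, the number of standard `k`-multitableaux
of size `m`. -/
noncomputable def multitabCount (m k : ℕ) : ℚ :=
  ∑ i ∈ Finset.range (m / 2 + 1),
    (m.factorial : ℚ) / ((i.factorial : ℚ) * ((m - 2 * i).factorial : ℚ) * 2 ^ i) *
      (k : ℚ) ^ (m - i)

/-- The formal exponential `exp ∘ g` of a formal power series `g` (with zero constant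
coefficient), defined coefficientwise. -/
noncomputable def expComp (g : PowerSeries ℚ) : PowerSeries ℚ :=
  PowerSeries.mk fun n =>
    ∑ k ∈ Finset.range (n + 1), ((k.factorial : ℚ))⁻¹ * PowerSeries.coeff n (g ^ k)


/-!
Put `u = eˣ - 1`. Since `uⁱ/i! = ∑ₙ S(n,i) xⁿ/n!`, substituting `u` into an exponential generating
function `∑ dᵢ yⁱ/i!` gives the exponential generating function of `∑ᵢ S(n,i) dᵢ`. The exponent is
`(k+1)u + (k/2)u²`, and `exp((k+1)y + (k/2)y²) = eʸ · e^{ky} e^{ky²/2}`, where `e^{ky} e^{ky²/2}`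
generates `T(m,k)` and the factor `eʸ` turns it into the binomial transform
`dᵢ = ∑ₘ C(i,m) T(m,k)`. Exchanging the sums in `∑ₘ M(n,m) T(m,k)` gives `∑ᵢ S(n,i) dᵢ`.
-/

open Finset PowerSeries Nat

theorem stirling2_eq_stirlingSecond : ∀ n i, stirling2 n i = stirlingSecond n i
  | 0, 0 | 0, _ + 1 | _ + 1, 0 => rfl
  | n + 1, i + 1 => by
    rw [stirling2, stirlingSecond_succ_succ, stirling2_eq_stirlingSecond n (i + 1),
      stirling2_eq_stirlingSecond n i]

theorem coeff_pow_eq_zero_of_lt {R : Type*} [CommSemiring R] {g : R⟦X⟧}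
    (hg : constantCoeff g = 0) {n d : ℕ} (h : n < d) : coeff n (g ^ d) = 0 :=
  coeff_of_lt_order n <|
    (ENat.natCast_lt_natCast.mpr h).trans_le (le_order_pow_of_constantCoeff_eq_zero d hg)

-- `((eˣ - 1)ⁱ⁺¹)' = (i + 1)((eˣ - 1)ⁱ⁺¹ + (eˣ - 1)ⁱ)` is the recurrence of `S(n,i)` in disguise.
theorem coeff_exp_sub_one_pow (n i : ℕ) :
    coeff n ((exp ℚ - 1) ^ i) = (i ! * stirlingSecond n i : ℚ) / n ! := by
  induction n generalizing i with
  | zero => cases i <;> simp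
  | succ n ih =>
    cases i with
    | zero => simp
    | succ i =>
      have hD : d⁄dX ℚ ((exp ℚ - 1) ^ (i + 1)) =
          C ((i : ℚ) + 1) * ((exp ℚ - 1) ^ (i + 1) + (exp ℚ - 1) ^ i) := by
        rw [derivative_pow, map_sub, derivative_exp, derivative_one]
        simp only [map_add, map_natCast, map_one]
        push_cast; ring
      have h := congrArg (coeff n) hD
      rw [coeff_derivative, coeff_C_mul, map_add, ih, ih] at h
      rw [stirlingSecond_succ_succ]
      field_simp at h ⊢
      push_cast [factorial_succ] at h ⊢
      linear_combination h

theorem coeff_subst_exp_sub_one (f : ℚ⟦X⟧) (n : ℕ) :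
    coeff n (f.subst (exp ℚ - 1)) =
      (∑ i ∈ range (n + 1), stirlingSecond n i * (i ! * coeff i f)) / n ! := by
  rw [coeff_subst' HasSubst.exp_sub_one, finsum_eq_sum_of_support_subset (s := range (n + 1)),
    sum_div]
  · refine sum_congr rfl fun i _ => ?_
    rw [coeff_exp_sub_one_pow, smul_eq_mul]
    ring
  · intro i hi
    by_contra hn
    rw [coe_range, Set.mem_Iio, not_lt] at hn
    rw [Function.mem_support, coeff_exp_sub_one_pow, stirlingSecond_eq_zero_of_lt (by omega)] at hi
    simp at hi

theorem constantCoeff_subst_exp_sub_one (f : ℚ⟦X⟧) :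
    constantCoeff (f.subst (exp ℚ - 1)) = constantCoeff f := by
  simpa using coeff_subst_exp_sub_one f 0

theorem expComp_eq_subst {g : ℚ⟦X⟧} (hg : constantCoeff g = 0) :
    expComp g = (exp ℚ).subst g := by
  ext n
  rw [expComp, coeff_mk, coeff_subst' (HasSubst.of_constantCoeff_zero' hg),
    finsum_eq_sum_of_support_subset (s := range (n + 1))]
  · simp [coeff_exp]
  · intro d hd
    by_contra hn
    rw [coe_range, Set.mem_Iio, not_lt] at hn
    rw [Function.mem_support, coeff_pow_eq_zero_of_lt hg (by omega), smul_zero] at hd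
    exact hd rfl

theorem constantCoeff_subst_exp {g : ℚ⟦X⟧} (hg : constantCoeff g = 0) :
    constantCoeff ((exp ℚ).subst g) = 1 := by
  rw [← expComp_eq_subst hg, ← coeff_zero_eq_constantCoeff_apply, expComp]
  simp

theorem derivative_subst_exp {g : ℚ⟦X⟧} (hg : constantCoeff g = 0) :
    d⁄dX ℚ ((exp ℚ).subst g) = (exp ℚ).subst g * d⁄dX ℚ g := by
  rw [derivative_subst (HasSubst.of_constantCoeff_zero' hg), derivative_exp]

-- Both sides solve `F' = (f + g)' F`; compare them through `exp (-(f + g))`.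
theorem subst_exp_add {f g : ℚ⟦X⟧} (hf : constantCoeff f = 0) (hg : constantCoeff g = 0) :
    (exp ℚ).subst (f + g) = (exp ℚ).subst f * (exp ℚ).subst g := by
  have hfg : constantCoeff (f + g) = 0 := by simp [hf, hg]
  have hneg : constantCoeff (-(f + g)) = 0 := by rw [map_neg, hfg, neg_zero]
  have inv : (exp ℚ).subst (f + g) * (exp ℚ).subst (-(f + g)) = 1 := by
    refine derivative.ext ?_ ?_
    · rw [Derivation.leibniz, derivative_subst_exp hfg, derivative_subst_exp hneg, map_neg,
        derivative_one]
      simp only [smul_eq_mul]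
      ring
    · rw [map_mul, constantCoeff_subst_exp hfg, constantCoeff_subst_exp hneg, map_one, one_mul]
  have triple : (exp ℚ).subst f * (exp ℚ).subst g * (exp ℚ).subst (-(f + g)) = 1 := by
    refine derivative.ext ?_ ?_
    · rw [Derivation.leibniz, Derivation.leibniz, derivative_subst_exp hf, derivative_subst_exp hg,
        derivative_subst_exp hneg, map_neg, map_add, derivative_one]
      simp only [smul_eq_mul]
      ring
    · rw [map_mul, map_mul, constantCoeff_subst_exp hf, constantCoeff_subst_exp hg,
        constantCoeff_subst_exp hneg, map_one, one_mul, one_mul]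
  calc (exp ℚ).subst (f + g)
      = (exp ℚ).subst (f + g) *
          ((exp ℚ).subst f * (exp ℚ).subst g * (exp ℚ).subst (-(f + g))) := by
        rw [triple, mul_one]
    _ = (exp ℚ).subst f * (exp ℚ).subst g *
          ((exp ℚ).subst (f + g) * (exp ℚ).subst (-(f + g))) := by
        ring
    _ = _ := by rw [inv, mul_one]

theorem coeff_exp_mul (f : ℚ⟦X⟧) (n : ℕ) :
    coeff n (exp ℚ * f) = (∑ m ∈ range (n + 1), n.choose m * (m ! * coeff m f)) / n ! := by
  rw [mul_comm, coeff_mul, Nat.sum_antidiagonal_eq_sum_range_succ_mk, sum_div]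
  refine sum_congr rfl fun m hm => ?_
  rw [coeff_exp, Algebra.algebraMap_self, RingHom.id_apply,
    cast_choose ℚ (Nat.lt_succ_iff.mp (mem_range.mp hm))]
  field_simp

theorem sum_range_succ_eq_sum_even {M : Type*} [AddCommMonoid M] (g : ℕ → M) (m : ℕ)
    (hg : ∀ b, ¬ 2 ∣ b → g b = 0) :
    ∑ b ∈ range (m + 1), g b = ∑ i ∈ range (m / 2 + 1), g (2 * i) := by
  rw [← sum_image (s := range (m / 2 + 1)) (g := (2 * ·))
    fun i _ j _ h => by simp only at h; omega]
  refine (sum_subset (fun b hb => ?_) fun b _ hb => hg b fun ⟨i, hi⟩ => hb ?_).symm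
  · obtain ⟨i, hi, rfl⟩ := mem_image.mp hb
    rw [mem_range] at hi ⊢
    omega
  · rw [mem_range] at *
    exact mem_image.mpr ⟨i, mem_range.mpr (by omega), hi.symm⟩

theorem multitabCount_egf (k : ℕ) :
    mk (fun m => multitabCount m k / m !) =
      rescale (k : ℚ) (exp ℚ) * (rescale ((k : ℚ) / 2) (exp ℚ)).subst (X ^ 2 : ℚ⟦X⟧) := by
  ext m
  rw [coeff_mk, mul_comm, coeff_mul, Nat.sum_antidiagonal_eq_sum_range_succ_mk,
    sum_range_succ_eq_sum_even, multitabCount, sum_div]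
  · refine sum_congr rfl fun i hi => ?_
    have h2i : 2 * i ≤ m := by rw [mem_range] at hi; omega
    simp only [coeff_subst_X_pow two_ne_zero, coeff_rescale, coeff_exp, dvd_mul_right, if_true,
      Nat.mul_div_cancel_left i two_pos, Algebra.algebraMap_self, RingHom.id_apply]
    rw [show m - i = i + (m - 2 * i) by omega, pow_add, div_pow]
    field_simp
  · intro b hb
    simp [hb]

theorem sum_mergeCount_mul (n : ℕ) (t : ℕ → ℚ) :
    ∑ m ∈ range (n + 1), (mergeCount n m : ℚ) * t m =
      ∑ i ∈ range (n + 1), stirlingSecond n i * ∑ m ∈ range (i + 1), i.choose m * t m := by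
  simp only [mergeCount, stirling2_eq_stirlingSecond, cast_sum, cast_mul, sum_mul, mul_sum]
  rw [sum_comm' (t' := range (n + 1)) (s' := fun i => range (i + 1))
    fun m i => by simp only [mem_range, mem_Icc]; omega]
  exact sum_congr rfl fun i _ => sum_congr rfl fun m _ => by ring

theorem subst_exp_quadratic (a b : ℚ) :
    (exp ℚ).subst (a • X + b • X ^ 2 : ℚ⟦X⟧) =
      rescale a (exp ℚ) * (rescale b (exp ℚ)).subst (X ^ 2 : ℚ⟦X⟧) := by
  have hX2 : HasSubst (X ^ 2 : ℚ⟦X⟧) := HasSubst.X_pow two_ne_zero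
  rw [subst_exp_add (by simp) (by simp), rescale_eq_subst, rescale_eq_subst,
    subst_comp_subst_apply (HasSubst.smul_X' b) hX2, subst_smul hX2, subst_X hX2]

theorem cob_exponent_eq_subst_exp_sub_one (c : ℚ) :
    C (c / 2) * expComp (C 2 * X) + expComp X - C ((c + 2) / 2) =
      ((c + 1) • X + (c / 2) • X ^ 2 : ℚ⟦X⟧).subst (exp ℚ - 1) := by
  have hu := HasSubst.exp_sub_one (A := ℚ)
  have hsq : exp ℚ ^ 2 = rescale 2 (exp ℚ) := by
    rw [exp_pow_eq_rescale_exp, Nat.cast_ofNat]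
  rw [expComp_eq_subst (by simp), expComp_eq_subst (by simp), X_subst, ← smul_eq_C_mul X 2,
    ← rescale_eq_subst, ← hsq, subst_add hu, subst_smul hu, subst_smul hu, subst_pow hu,
    subst_X hu]
  simp only [smul_eq_C_mul]
  rw [show (c + 2) / 2 = c / 2 + 1 by ring, show c + 1 = c / 2 * 2 + 1 by ring]
  simp only [map_add, map_mul, map_one, map_ofNat]
  ring

theorem cob_egf_general (k : ℕ) :
    PowerSeries.mk (fun n =>
        (∑ m ∈ Finset.range (n + 1), (mergeCount n m : ℚ) * multitabCount m k) /
          (n.factorial : ℚ)) =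
      expComp (PowerSeries.C ((k : ℚ) / 2) * expComp (PowerSeries.C (2 : ℚ) * PowerSeries.X) +
        expComp PowerSeries.X - PowerSeries.C (((k : ℚ) + 2) / 2)) := by
  have hP : constantCoeff ((k + 1 : ℚ) • X + ((k : ℚ) / 2) • X ^ 2 : ℚ⟦X⟧) = 0 := by simp
  rw [cob_exponent_eq_subst_exp_sub_one,
    expComp_eq_subst ((constantCoeff_subst_exp_sub_one _).trans hP),
    ← subst_comp_subst_apply (HasSubst.of_constantCoeff_zero' hP) HasSubst.exp_sub_one,
    subst_exp_quadratic, add_comm (k : ℚ), ← exp_mul_exp_eq_exp_add, rescale_one,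
    RingHom.id_apply, mul_assoc, ← multitabCount_egf]
  ext n
  rw [coeff_mk, coeff_subst_exp_sub_one, sum_mergeCount_mul]
  congr 1
  refine sum_congr rfl fun i _ => ?_
  rw [coeff_exp_mul, mul_div_cancel₀ _ (by positivity)]
  congr 1
  refine sum_congr rfl fun m _ => ?_
  rw [coeff_mk, mul_div_cancel₀ _ (by positivity)]

/-- For the cobordism category `Cob_k`: the exponential generating function of
`b_n = ∑_{m=0}^{n} M(n,m) * T(m,k)` is `exp((k/2)·exp(2x) + exp(x) - (k+2)/2)`. -/
theorem cob_egf (k : ℕ) (hk : 0 < k) :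
    PowerSeries.mk (fun n =>
        (∑ m ∈ Finset.range (n + 1), (mergeCount n m : ℚ) * multitabCount m k) /
          (n.factorial : ℚ)) =
      expComp (PowerSeries.C ((k : ℚ) / 2) * expComp (PowerSeries.C (2 : ℚ) * PowerSeries.X) +
        expComp PowerSeries.X - PowerSeries.C (((k : ℚ) + 2) / 2)) :=
  cob_egf_general k
end

section
/- For every n >= 0 and prime power q, the identity sum_{k=0}^{n} (sum_{l=k}^{n} qbinom(n,l) * qbinom(l,k)) * q^{binomial(k+1,2)} * prod_{odd i, 1<=i<=k} (1 - q^{-i}) = prod_{k=1}^{n} (q^k + 1) holds, where qbinom denotes the Gaussian binomial coefficient. -/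
/-- The Gaussian binomial coefficient `[a choose b]_q = ∏_{j=0}^{b-1} (q^(a-j)-1)/(q^(j+1)-1)`. -/
noncomputable def qbinom (q : ℝ) (a b : ℕ) : ℝ :=
  ∏ j ∈ Finset.range b, (q ^ (a - j) - 1) / (q ^ (j + 1) - 1)


open Finset


lemma qden_pos {q : ℝ} (hq : 1 < q) (m : ℕ) : 0 < q ^ (m + 1) - 1 := by
  have : (1:ℝ) < q ^ (m+1) := one_lt_pow₀ hq (Nat.succ_ne_zero m)
  linarith

lemma qbinom_zero (q : ℝ) (a : ℕ) : qbinom q a 0 = 1 := by simp [qbinom]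

lemma qbinom_eq_zero (q : ℝ) {a b : ℕ} (h : a < b) : qbinom q a b = 0 := by
  apply Finset.prod_eq_zero (Finset.mem_range.2 h)
  simp

lemma qbinom_A (q : ℝ) (a b : ℕ) :
    qbinom q a (b + 1) = qbinom q a b * ((q ^ (a - b) - 1) / (q ^ (b + 1) - 1)) :=
  Finset.prod_range_succ _ _

lemma qbinom_B (q : ℝ) (a b : ℕ) :
    qbinom q (a + 1) (b + 1) = qbinom q a b * ((q ^ (a + 1) - 1) / (q ^ (b + 1) - 1)) := by
  have hnum : ∏ j ∈ range (b+1), (q ^ (a + 1 - j) - 1)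
      = (q ^ (a + 1) - 1) * ∏ j ∈ range b, (q ^ (a - j) - 1) := by
    rw [Finset.prod_range_succ']
    simp [Nat.succ_sub_succ]
    ring
  have e1 : qbinom q (a+1) (b+1) = (∏ j ∈ range (b+1), (q ^ (a + 1 - j) - 1)) / ∏ j ∈ range (b+1), (q ^ (j + 1) - 1) := by
    rw [qbinom, Finset.prod_div_distrib]
  have e2 : qbinom q a b = (∏ j ∈ range b, (q ^ (a - j) - 1)) / ∏ j ∈ range b, (q ^ (j + 1) - 1) := by
    rw [qbinom, Finset.prod_div_distrib]
  rw [e1, e2, hnum, Finset.prod_range_succ, mul_comm (q ^ (a+1) - 1), mul_div_mul_comm]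

lemma qbinom_pascal1 (q : ℝ) (hq : 1 < q) (a b : ℕ) :
    qbinom q (a + 1) (b + 1) = qbinom q a (b + 1) + q ^ (a - b) * qbinom q a b := by
  rcases le_or_gt b a with h | h
  · have key : q ^ (a - b) * q ^ (b + 1) = q ^ (a + 1) := by
      rw [← pow_add]; congr 1; omega
    have hden : q ^ (b + 1) - 1 ≠ 0 := ne_of_gt (qden_pos hq b)
    rw [qbinom_B, qbinom_A]
    field_simp
    ring_nf
    linear_combination (-(qbinom q a b)) * key
  · rw [qbinom_eq_zero q (by omega), qbinom_eq_zero q (by omega), qbinom_eq_zero q (by omega)]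
    ring

lemma qbinom_pascal2 (q : ℝ) (hq : 1 < q) (a b : ℕ) :
    qbinom q (a + 1) (b + 1) = q ^ (b + 1) * qbinom q a (b + 1) + qbinom q a b := by
  rcases le_or_gt b a with h | h
  · have key : q ^ (a - b) * q ^ (b + 1) = q ^ (a + 1) := by
      rw [← pow_add]; congr 1; omega
    have hden : q ^ (b + 1) - 1 ≠ 0 := ne_of_gt (qden_pos hq b)
    rw [qbinom_B, qbinom_A]
    field_simp
    ring_nf
    linear_combination (-(qbinom q a b)) * key
  · rw [qbinom_eq_zero q (by omega), qbinom_eq_zero q (by omega), qbinom_eq_zero q (by omega)]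
    ring



noncomputable def Pw (q : ℝ) (k : ℕ) : ℝ :=
  q ^ (Nat.choose (k + 1) 2) * ∏ i ∈ (Finset.Icc 1 k).filter (fun i => Odd i), (1 - 1 / q ^ i)

lemma choose_two_succ (k : ℕ) : Nat.choose (k + 2) 2 = Nat.choose (k + 1) 2 + (k + 1) := by
  rw [Nat.choose_succ_succ (k+1) 1, Nat.choose_one_right, add_comm]

lemma Pw_zero (q : ℝ) : Pw q 0 = 1 := by simp [Pw]

lemma filter_odd_succ (k : ℕ) :
    (Finset.Icc 1 (k+1)).filter (fun i => Odd i)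
      = if Odd (k+1) then insert (k+1) ((Finset.Icc 1 k).filter (fun i => Odd i))
        else (Finset.Icc 1 k).filter (fun i => Odd i) := by
  rw [show Finset.Icc 1 (k+1) = insert (k+1) (Finset.Icc 1 k) from ?_, Finset.filter_insert]
  ext x; simp [Nat.lt_succ_iff]; omega

lemma Pw_succ_even (q : ℝ) (hq : 1 < q) {k : ℕ} (hk : Even k) :
    Pw q (k + 1) = (q ^ (k + 1) - 1) * Pw q k := by
  have hq0 : (q : ℝ) ≠ 0 := by positivity
  have hodd : Odd (k + 1) := Even.add_one hk
  have hnot : (k+1) ∉ (Finset.Icc 1 k).filter (fun i => Odd i) := by simp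
  rw [Pw, filter_odd_succ, if_pos hodd, Finset.prod_insert hnot, choose_two_succ, pow_add, Pw]
  have : q ^ (k + 1) * (1 - 1 / q ^ (k + 1)) = q ^ (k + 1) - 1 := by
    field_simp
  calc q ^ ((k+1).choose 2) * q ^ (k+1) * ((1 - 1/q^(k+1)) * ∏ i ∈ (Finset.Icc 1 k).filter (fun i => Odd i), (1 - 1 / q ^ i))
      = (q ^ (k+1) * (1 - 1/q^(k+1))) * (q ^ ((k+1).choose 2) * ∏ i ∈ (Finset.Icc 1 k).filter (fun i => Odd i), (1 - 1 / q ^ i)) := by ring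
    _ = _ := by rw [this]

lemma Pw_succ_odd (q : ℝ) {k : ℕ} (hk : Odd k) :
    Pw q (k + 1) = q ^ (k + 1) * Pw q k := by
  have heven : ¬ Odd (k + 1) := by simp [Nat.odd_add_one, Nat.not_even_iff_odd.mpr hk]
  rw [Pw, filter_odd_succ, if_neg heven, choose_two_succ, pow_add, Pw]
  ring

noncomputable def ff (q : ℝ) (l : ℕ) : ℝ := ∑ k ∈ range (l + 1), qbinom q l k * Pw q k
noncomputable def DD (q : ℝ) (l : ℕ) : ℝ :=
  ∑ k ∈ range (l + 1), if Even k then qbinom q l k * Pw q k / q ^ k else 0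
noncomputable def EE (q : ℝ) (l : ℕ) : ℝ :=
  ∑ k ∈ range (l + 1), if Even k then qbinom q l k * Pw q k else 0

lemma ff_succ (q : ℝ) (hq : 1 < q) (l : ℕ) :
    ff q (l + 1) = ff q l + q ^ (l + 1) * ff q l - q ^ l * DD q l := by
  have hq0 : (q : ℝ) ≠ 0 := by positivity
  rw [ff, Finset.sum_range_succ']
  have step : ∀ k ∈ range (l + 1),
      qbinom q (l+1) (k+1) * Pw q (k+1)
        = (qbinom q l (k+1) * Pw q (k+1)
            + (q ^ (l+1) * (qbinom q l k * Pw q k)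
              - (if Even k then q ^ l * (qbinom q l k * Pw q k / q ^ k) else 0))) := by
    intro k hk
    have hkl : k ≤ l := Nat.lt_succ_iff.mp (mem_range.mp hk)
    have h1 : q ^ (l - k) * q ^ k = q ^ l := by rw [← pow_add]; congr 1; omega
    have h2 : q ^ (l - k) * q ^ (k + 1) = q ^ (l + 1) := by rw [← pow_add]; congr 1; omega
    have hk0 : (q : ℝ) ^ k ≠ 0 := pow_ne_zero _ hq0
    rw [qbinom_pascal1 q hq, add_mul]
    congr 1
    rcases Nat.even_or_odd k with he | ho
    · rw [if_pos he, Pw_succ_even q hq he, ← h1, ← h2]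
      have hc : q ^ (l-k) * q ^ k * (qbinom q l k * Pw q k / q ^ k)
          = q ^ (l-k) * (qbinom q l k * Pw q k) := by
        field_simp
      rw [hc]
      ring
    · rw [if_neg (by simpa [Nat.not_even_iff_odd] using ho), Pw_succ_odd q ho]
      linear_combination (qbinom q l k * Pw q k) * h2
  rw [Finset.sum_congr rfl step, Finset.sum_add_distrib, Finset.sum_sub_distrib]
  have hS1 : ∑ k ∈ range (l + 1), qbinom q l (k+1) * Pw q (k+1) = ff q l - 1 := by
    have e1 := Finset.sum_range_succ' (fun k => qbinom q l k * Pw q k) (l + 1)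
    have e2 := Finset.sum_range_succ (fun k => qbinom q l k * Pw q k) (l + 1)
    have e3 : qbinom q l (l+1) * Pw q (l+1) = 0 := by
      rw [qbinom_eq_zero q (by omega)]; ring
    rw [e3] at e2
    rw [qbinom_zero, Pw_zero] at e1
    rw [show (∑ k ∈ range (l + 1 + 1), qbinom q l k * Pw q k) = ff q l + 0 from e2] at e1
    linarith [e1]
  have hS2 : ∑ k ∈ range (l + 1), q ^ (l+1) * (qbinom q l k * Pw q k) = q ^ (l+1) * ff q l := by
    rw [ff, Finset.mul_sum]
  have hS3 : ∑ k ∈ range (l + 1), (if Even k then q ^ l * (qbinom q l k * Pw q k / q ^ k) else 0)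
      = q ^ l * DD q l := by
    rw [DD, Finset.mul_sum]
    exact Finset.sum_congr rfl fun k _ => by split <;> simp
  rw [hS1, hS2, hS3, qbinom_zero, Pw_zero]
  ring

lemma DD_succ (q : ℝ) (hq : 1 < q) (l : ℕ) :
    DD q (l + 1) = ff q l := by
  have hq0 : (q : ℝ) ≠ 0 := by positivity
  rw [DD, Finset.sum_range_succ']
  have step : ∀ k ∈ range (l + 1),
      (if Even (k+1) then qbinom q (l+1) (k+1) * Pw q (k+1) / q ^ (k+1) else 0)
        = (if Even (k+1) then qbinom q l (k+1) * Pw q (k+1) else 0)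
          + (if Even k then 0 else qbinom q l k * Pw q k) := by
    intro k hk
    rcases Nat.even_or_odd k with he | ho
    · simp [Nat.even_add_one, he]
    · have he1 : Even (k + 1) := Odd.add_one ho
      have hne : ¬ Even k := by simpa [Nat.not_even_iff_odd] using ho
      rw [if_pos he1, if_pos he1, if_neg hne, qbinom_pascal2 q hq, Pw_succ_odd q ho]
      have hk0 : (q : ℝ) ^ (k+1) ≠ 0 := pow_ne_zero _ hq0
      field_simp
  rw [Finset.sum_congr rfl step, Finset.sum_add_distrib]
  have hT1 : ∑ k ∈ range (l + 1), (if Even (k+1) then qbinom q l (k+1) * Pw q (k+1) else 0)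
      = EE q l - 1 := by
    have e1 := Finset.sum_range_succ' (fun k => if Even k then qbinom q l k * Pw q k else 0) (l + 1)
    have e2 := Finset.sum_range_succ (fun k => if Even k then qbinom q l k * Pw q k else 0) (l + 1)
    have e3 : (if Even (l+1) then qbinom q l (l+1) * Pw q (l+1) else 0) = 0 := by
      rw [qbinom_eq_zero q (by omega)]; split <;> ring
    rw [e3] at e2
    simp only [qbinom_zero, Pw_zero] at e1
    rw [show (∑ k ∈ range (l + 1 + 1), if Even k then qbinom q l k * Pw q k else 0) = EE q l + 0 from e2] at e1
    norm_num at e1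
    linarith [e1]
  have hT2 : ∑ k ∈ range (l + 1), (if Even k then 0 else qbinom q l k * Pw q k)
      = ff q l - EE q l := by
    rw [ff, EE, ← Finset.sum_sub_distrib]
    exact Finset.sum_congr rfl fun k _ => by split <;> ring
  rw [hT1, hT2]
  simp [qbinom_zero, Pw_zero]

lemma fD (q : ℝ) (hq : 1 < q) : ∀ l, ff q l = q ^ (Nat.choose (l+1) 2) ∧ DD q l = q ^ (Nat.choose l 2) := by
  intro l
  induction l with
  | zero =>
    constructor
    · simp [ff, qbinom_zero, Pw_zero]
    · simp [DD, qbinom_zero, Pw_zero]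
  | succ l ih =>
    have hcc : Nat.choose (l + 1) 2 = Nat.choose l 2 + l := by
      rw [Nat.choose_succ_succ l 1, Nat.choose_one_right, add_comm]
    constructor
    · rw [ff_succ q hq, ih.1, ih.2, choose_two_succ, hcc]
      rw [pow_add, pow_add, pow_add]
      ring
    · rw [DD_succ q hq, ih.1]

lemma gsum (q : ℝ) (hq : 1 < q) :
    ∀ n, ∑ l ∈ range (n + 1), qbinom q n l * q ^ (Nat.choose (l + 1) 2)
      = ∏ k ∈ Finset.Icc 1 n, (q ^ k + 1) := by
  intro n
  induction n with
  | zero => simp [qbinom_zero]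
  | succ n ih =>
    rw [Finset.sum_range_succ']
    have step : ∀ l ∈ range (n + 1),
        qbinom q (n+1) (l+1) * q ^ (Nat.choose (l+2) 2)
          = qbinom q n (l+1) * q ^ (Nat.choose (l+2) 2)
            + q ^ (n+1) * (qbinom q n l * q ^ (Nat.choose (l+1) 2)) := by
      intro l hl
      have hln : l ≤ n := Nat.lt_succ_iff.mp (mem_range.mp hl)
      have h2 : q ^ (n - l) * q ^ (l + 1) = q ^ (n + 1) := by rw [← pow_add]; congr 1; omega
      rw [qbinom_pascal1 q hq, add_mul, choose_two_succ, pow_add, ← h2]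
      ring
    rw [Finset.sum_congr rfl step, Finset.sum_add_distrib]
    have hA : ∑ l ∈ range (n + 1), qbinom q n (l+1) * q ^ (Nat.choose (l+2) 2)
        = (∑ l ∈ range (n + 1), qbinom q n l * q ^ (Nat.choose (l + 1) 2)) - 1 := by
      have e1 := Finset.sum_range_succ' (fun l => qbinom q n l * q ^ (Nat.choose (l + 1) 2)) (n + 1)
      have e2 := Finset.sum_range_succ (fun l => qbinom q n l * q ^ (Nat.choose (l + 1) 2)) (n + 1)
      have e3 : qbinom q n (n+1) * q ^ (Nat.choose (n+2) 2) = 0 := by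
        rw [qbinom_eq_zero q (by omega)]; ring
      rw [e3] at e2
      rw [e2, qbinom_zero] at e1
      norm_num at e1
      linarith [e1]
    have hB : ∑ l ∈ range (n + 1), q ^ (n+1) * (qbinom q n l * q ^ (Nat.choose (l + 1) 2))
        = q ^ (n+1) * ∑ l ∈ range (n + 1), qbinom q n l * q ^ (Nat.choose (l + 1) 2) :=
      (Finset.mul_sum _ _ _).symm
    rw [hA, hB, ih, qbinom_zero, Finset.prod_Icc_succ_top (by omega : 1 ≤ n + 1)]
    norm_num
    ring

lemma swap_sum (q : ℝ) (n : ℕ) :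
    ∑ k ∈ range (n + 1), (∑ l ∈ Finset.Icc k n, qbinom q n l * qbinom q l k) * Pw q k
      = ∑ l ∈ range (n + 1), qbinom q n l * ∑ k ∈ range (l + 1), qbinom q l k * Pw q k := by
  have e1 : ∀ k ∈ range (n + 1),
      (∑ l ∈ Finset.Icc k n, qbinom q n l * qbinom q l k) * Pw q k
        = ∑ l ∈ range (n + 1), if k ≤ l then qbinom q n l * qbinom q l k * Pw q k else 0 := by
    intro k hk
    rw [Finset.sum_mul]
    have : Finset.Icc k n = (range (n + 1)).filter (fun l => k ≤ l) := by
      ext x; simp [Nat.lt_succ_iff]; omega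
    rw [this, Finset.sum_filter]
  rw [Finset.sum_congr rfl e1, Finset.sum_comm]
  refine Finset.sum_congr rfl fun l hl => ?_
  have hln : l ≤ n := Nat.lt_succ_iff.mp (mem_range.mp hl)
  rw [Finset.mul_sum]
  have : range (l + 1) = (range (n + 1)).filter (fun k => k ≤ l) := by
    ext x; simp [Nat.lt_succ_iff]; omega
  rw [this, Finset.sum_filter]
  exact Finset.sum_congr rfl fun k _ => by split <;> ring


/-- For every real `q > 1` and every `n ≥ 0`:
`∑_{k=0}^{n} (∑_{l=k}^{n} [n,l]_q [l,k]_q) * q^C(k+1,2) * ∏_{odd i, 1≤i≤k} (1 - q⁻ⁱ)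
  = ∏_{k=1}^{n} (q^k + 1)`. -/
theorem glt_count_identity (q : ℝ) (hq : 1 < q) (n : ℕ) :
    ∑ k ∈ Finset.range (n + 1),
        (∑ l ∈ Finset.Icc k n, qbinom q n l * qbinom q l k) *
          q ^ (Nat.choose (k + 1) 2) *
          ∏ i ∈ (Finset.Icc 1 k).filter (fun i => Odd i), (1 - 1 / q ^ i) =
      ∏ k ∈ Finset.Icc 1 n, (q ^ k + 1) := by
  have e0 : ∀ k, (∑ l ∈ Finset.Icc k n, qbinom q n l * qbinom q l k) *
          q ^ (Nat.choose (k + 1) 2) *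
          ∏ i ∈ (Finset.Icc 1 k).filter (fun i => Odd i), (1 - 1 / q ^ i)
      = (∑ l ∈ Finset.Icc k n, qbinom q n l * qbinom q l k) * Pw q k := by
    intro k; rw [Pw]; ring
  calc ∑ k ∈ Finset.range (n + 1), _ = ∑ k ∈ range (n + 1), (∑ l ∈ Finset.Icc k n, qbinom q n l * qbinom q l k) * Pw q k :=
        Finset.sum_congr rfl fun k _ => e0 k
    _ = ∑ l ∈ range (n + 1), qbinom q n l * ∑ k ∈ range (l + 1), qbinom q l k * Pw q k := swap_sum q n
    _ = ∑ l ∈ range (n + 1), qbinom q n l * q ^ (Nat.choose (l + 1) 2) :=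
        Finset.sum_congr rfl fun l _ => by rw [show (∑ k ∈ range (l + 1), qbinom q l k * Pw q k) = ff q l from rfl, (fD q hq l).1]
    _ = ∏ k ∈ Finset.Icc 1 n, (q ^ k + 1) := gsum q hq n
end
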